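/- arXiv:1010.0426 — 3 statements merged into one kernel-verified Lean document; each statement's English description precedes it below -/
import Mathlib

section
/- For 0 < α < 2, the improper integral ∫₀^∞ y^{-α} sin(y) dy equals (π/2) / (Γ(α) sin(πα/2)). -/
/-!
Write `Γ(α) y^(-α) = ∫₀^∞ t^(α-1) e^(-yt) dt` and swap the integrals over `y ∈ (0, T]` and
`t > 0` (absolutely convergent since `|sin y| ≤ y` and `α < 2`). The Laplace transform of `sin`
on `[0, T]` is `1/(1+t²)` minus a boundary term bounded by `e^(-tT)`, which contributes at most
`Γ(α) T^(-α)`. What remains is `∫₀^∞ t^(α-1)/(1+t²) dt`; the substitution `u = t²` and the same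
Gamma-kernel swap turn it into `Γ(α/2) Γ(1-α/2) / 2 = (π/2) / sin(πα/2)`.
-/

open Real Filter MeasureTheory Set Topology

lemma integrableOn_rpow_mul_exp_neg_mul_Ioi {a r : ℝ} (ha : 0 < a) (hr : 0 < r) :
    IntegrableOn (fun t : ℝ => t ^ (a - 1) * exp (-(r * t))) (Ioi 0) := by
  simpa using
    integrableOn_rpow_mul_exp_neg_mul_rpow (p := 1) (by linarith : -1 < a - 1) one_pos hr

lemma integral_rpow_mul_exp_neg_mul_Ioi_eq_Gamma_mul {a r : ℝ} (ha : 0 < a) (hr : 0 < r) :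
    ∫ t in Ioi 0, t ^ (a - 1) * exp (-(r * t)) = Gamma a * r ^ (-a) := by
  rw [integral_rpow_mul_exp_neg_mul_Ioi ha hr, one_div, inv_rpow hr.le, ← rpow_neg hr.le, mul_comm]

section GammaKernel

variable {a : ℝ} {μ : Measure ℝ} {g : ℝ → ℝ}

lemma integrable_prod_rpow_mul_exp_neg_mul (ha : 0 < a) (hμ : ∀ᵐ y ∂μ, 0 < y)
    (hg : AEStronglyMeasurable g μ) (hgi : Integrable (fun y => y ^ (-a) * g y) μ) :
    Integrable (fun p : ℝ × ℝ => p.2 ^ (a - 1) * exp (-(p.1 * p.2)) * g p.1)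
      (μ.prod (volume.restrict (Ioi 0))) := by
  have hmeas : AEStronglyMeasurable (fun p : ℝ × ℝ => p.2 ^ (a - 1) * exp (-(p.1 * p.2)) * g p.1)
      (μ.prod (volume.restrict (Ioi 0))) :=
    (by fun_prop : Measurable fun p : ℝ × ℝ => p.2 ^ (a - 1) * exp (-(p.1 * p.2)))
      |>.aestronglyMeasurable.mul hg.comp_fst
  refine (integrable_prod_iff hmeas).2 ⟨?_, ?_⟩
  · filter_upwards [hμ] with y hy
    exact (integrableOn_rpow_mul_exp_neg_mul_Ioi ha hy).mul_const _
  · refine (hgi.norm.const_mul (Gamma a)).congr ?_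
    filter_upwards [hμ] with y hy
    have : ∀ t ∈ Ioi (0 : ℝ), ‖t ^ (a - 1) * exp (-(y * t)) * g y‖
        = t ^ (a - 1) * exp (-(y * t)) * ‖g y‖ := fun t ht => by
      rw [norm_mul, Real.norm_of_nonneg (by have := ht.out; positivity)]
    rw [setIntegral_congr_fun measurableSet_Ioi this, integral_mul_const,
      integral_rpow_mul_exp_neg_mul_Ioi_eq_Gamma_mul ha hy, norm_mul,
      Real.norm_of_nonneg (rpow_pos_of_pos hy _).le, mul_assoc]

lemma integrableOn_rpow_mul_integral_exp_neg_mul [SFinite μ] (ha : 0 < a) (hμ : ∀ᵐ y ∂μ, 0 < y)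
    (hg : AEStronglyMeasurable g μ) (hgi : Integrable (fun y => y ^ (-a) * g y) μ) :
    IntegrableOn (fun t => t ^ (a - 1) * ∫ y, exp (-(t * y)) * g y ∂μ) (Ioi 0) := by
  refine (integrable_prod_rpow_mul_exp_neg_mul ha hμ hg hgi).integral_prod_right.congr ?_
  refine Eventually.of_forall fun t => ?_
  simp only [← integral_const_mul]
  congr 1 with y
  ring_nf

theorem Gamma_mul_integral_rpow_neg_mul [SFinite μ] (ha : 0 < a) (hμ : ∀ᵐ y ∂μ, 0 < y)
    (hg : AEStronglyMeasurable g μ) (hgi : Integrable (fun y => y ^ (-a) * g y) μ) :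
    Gamma a * ∫ y, y ^ (-a) * g y ∂μ
      = ∫ t in Ioi 0, t ^ (a - 1) * ∫ y, exp (-(t * y)) * g y ∂μ := by
  have inner : ∀ᵐ y ∂μ, Gamma a * (y ^ (-a) * g y)
      = ∫ t in Ioi 0, t ^ (a - 1) * exp (-(y * t)) * g y := by
    filter_upwards [hμ] with y hy
    rw [integral_mul_const, integral_rpow_mul_exp_neg_mul_Ioi_eq_Gamma_mul ha hy, mul_assoc]
  rw [← integral_const_mul, integral_congr_ae inner,
    integral_integral_swap (f := fun y t => t ^ (a - 1) * exp (-(y * t)) * g y)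
      (integrable_prod_rpow_mul_exp_neg_mul ha hμ hg hgi)]
  congr 1 with t
  rw [← integral_const_mul]
  congr 1 with y
  ring_nf

end GammaKernel

lemma integral_exp_neg_mul_mul_exp_neg_Ioi {t : ℝ} (ht : -1 < t) :
    ∫ y in Ioi 0, exp (-(t * y)) * exp (-y) = (1 + t)⁻¹ := by
  have : ∀ y : ℝ, exp (-(t * y)) * exp (-y) = exp (-(1 + t) * y) := fun y => by
    rw [← exp_add]
    ring_nf
  simp_rw [this]
  rw [integral_exp_mul_Ioi (by linarith) 0, mul_zero, exp_zero, neg_div_neg_eq, one_div]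

lemma integrableOn_rpow_neg_mul_exp_neg_Ioi {s : ℝ} (hs : s < 1) :
    IntegrableOn (fun y : ℝ => y ^ (-s) * exp (-y)) (Ioi 0) :=
  (GammaIntegral_convergent (by linarith : 0 < 1 - s)).congr_fun
    (fun y _ => by ring_nf) measurableSet_Ioi

section Beta

variable {s : ℝ}

lemma rpow_mul_integral_exp_neg_mul_mul_exp_neg_Ioi {t : ℝ} (ht : 0 < t) :
    t ^ (s - 1) * ∫ y in Ioi 0, exp (-(t * y)) * exp (-y) = t ^ (s - 1) / (1 + t) := by
  rw [integral_exp_neg_mul_mul_exp_neg_Ioi (by linarith), div_eq_mul_inv]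

lemma integrableOn_rpow_div_one_add_Ioi (hs0 : 0 < s) (hs1 : s < 1) :
    IntegrableOn (fun t : ℝ => t ^ (s - 1) / (1 + t)) (Ioi 0) :=
  (integrableOn_rpow_mul_integral_exp_neg_mul (μ := volume.restrict (Ioi 0)) hs0
      (ae_restrict_mem measurableSet_Ioi) (by fun_prop)
      (integrableOn_rpow_neg_mul_exp_neg_Ioi hs1)).congr_fun
    (fun _ ht => rpow_mul_integral_exp_neg_mul_mul_exp_neg_Ioi ht) measurableSet_Ioi

theorem integral_rpow_div_one_add_Ioi (hs0 : 0 < s) (hs1 : s < 1) :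
    ∫ t in Ioi 0, t ^ (s - 1) / (1 + t) = π / sin (π * s) := calc
  _ = ∫ t in Ioi 0, t ^ (s - 1) * ∫ y in Ioi 0, exp (-(t * y)) * exp (-y) :=
    (setIntegral_congr_fun measurableSet_Ioi
      fun _ ht => rpow_mul_integral_exp_neg_mul_mul_exp_neg_Ioi ht).symm
  _ = Gamma s * ∫ y in Ioi 0, y ^ (-s) * exp (-y) :=
    (Gamma_mul_integral_rpow_neg_mul (μ := volume.restrict (Ioi 0)) hs0
      (ae_restrict_mem measurableSet_Ioi) (by fun_prop)
      (integrableOn_rpow_neg_mul_exp_neg_Ioi hs1)).symm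
  _ = Gamma s * Gamma (1 - s) := by
    rw [Gamma_eq_integral (by linarith : 0 < 1 - s)]
    congr 1
    exact setIntegral_congr_fun measurableSet_Ioi fun y _ => by ring_nf
  _ = π / sin (π * s) := Gamma_mul_Gamma_one_sub s

end Beta

section BetaSq

variable {α : ℝ}

lemma rpow_mul_rpow_div_one_add_sq {x : ℝ} (hx : 0 < x) :
    x ^ ((2 : ℝ) - 1) * ((x ^ (2 : ℝ)) ^ (α / 2 - 1) / (1 + x ^ (2 : ℝ)))
      = x ^ (α - 1) / (1 + x ^ 2) := by
  rw [← rpow_mul hx.le, rpow_two, mul_div_assoc', ← rpow_add hx]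
  ring_nf

lemma integrableOn_rpow_div_one_add_sq_Ioi (h0 : 0 < α) (h2 : α < 2) :
    IntegrableOn (fun t : ℝ => t ^ (α - 1) / (1 + t ^ 2)) (Ioi 0) :=
  ((integrableOn_Ioi_comp_rpow_iff' _ two_ne_zero).2
    (integrableOn_rpow_div_one_add_Ioi (s := α / 2) (by linarith) (by linarith))).congr_fun
    (fun _ hx => rpow_mul_rpow_div_one_add_sq hx) measurableSet_Ioi

theorem integral_rpow_div_one_add_sq_Ioi (h0 : 0 < α) (h2 : α < 2) :
    ∫ t in Ioi 0, t ^ (α - 1) / (1 + t ^ 2) = π / 2 / sin (π * α / 2) := by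
  have h := integral_comp_rpow_Ioi_of_pos (g := fun y : ℝ => y ^ (α / 2 - 1) / (1 + y)) two_pos
  rw [integral_rpow_div_one_add_Ioi (by linarith) (by linarith),
    setIntegral_congr_fun measurableSet_Ioi fun x hx => by
      rw [smul_eq_mul, mul_assoc, rpow_mul_rpow_div_one_add_sq hx], integral_const_mul] at h
  rw [mul_div_assoc, div_right_comm, ← h]
  ring

end BetaSq

lemma abs_mul_sin_add_cos_le (t T : ℝ) : |t * sin T + cos T| ≤ 1 + t ^ 2 :=
  abs_le_of_sq_le_sq
    (by nlinarith [sin_sq_add_cos_sq T, sq_nonneg (t * cos T - sin T), sq_nonneg t])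
    (by positivity)

/-- `y ↦ -laplaceSinBoundary y t` is an antiderivative of `exp (-(t * y)) * sin y`. -/
noncomputable def laplaceSinBoundary (T t : ℝ) : ℝ :=
  exp (-(t * T)) * (t * sin T + cos T) / (1 + t ^ 2)

lemma integral_exp_neg_mul_mul_sin (t T : ℝ) :
    ∫ y in (0 : ℝ)..T, exp (-(t * y)) * sin y = (1 + t ^ 2)⁻¹ - laplaceSinBoundary T t := by
  have hderiv : ∀ y, HasDerivAt (fun y => -laplaceSinBoundary y t) (exp (-(t * y)) * sin y) y := by
    intro y
    have hexp : HasDerivAt (fun y => exp (-(t * y))) (-t * exp (-(t * y))) y := by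
      simpa [mul_comm] using ((hasDerivAt_id y).const_mul t).neg.exp
    have := ((hexp.mul (((hasDerivAt_sin y).const_mul t).add (hasDerivAt_cos y))).div_const
      (1 + t ^ 2)).neg
    refine this.congr_deriv ?_
    simp only [Pi.add_apply]
    field_simp
    ring
  rw [intervalIntegral.integral_eq_sub_of_hasDerivAt (fun y _ => hderiv y)
    ((by fun_prop : Continuous fun y => exp (-(t * y)) * sin y).intervalIntegrable _ _)]
  simp only [laplaceSinBoundary, mul_zero, neg_zero, exp_zero, sin_zero, cos_zero, zero_add,
    mul_one, one_div, sub_neg_eq_add]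
  ring

section Boundary

variable {α T : ℝ}

lemma norm_rpow_mul_laplaceSinBoundary_le {t : ℝ} (ht : 0 < t) :
    ‖t ^ (α - 1) * laplaceSinBoundary T t‖ ≤ t ^ (α - 1) * exp (-(T * t)) := by
  rw [laplaceSinBoundary, norm_eq_abs, abs_mul, abs_of_pos (rpow_pos_of_pos ht _), mul_comm T t]
  gcongr
  rw [abs_div, abs_mul, abs_of_pos (exp_pos _), abs_of_pos (by positivity : (0 : ℝ) < 1 + t ^ 2),
    mul_div_assoc]
  exact mul_le_of_le_one_right (exp_pos _).le
    ((div_le_one (by positivity)).2 (abs_mul_sin_add_cos_le t T))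

lemma integrableOn_rpow_mul_laplaceSinBoundary (hα : 0 < α) (hT : 0 < T) :
    IntegrableOn (fun t => t ^ (α - 1) * laplaceSinBoundary T t) (Ioi 0) :=
  (integrableOn_rpow_mul_exp_neg_mul_Ioi hα hT).mono'
    (by unfold laplaceSinBoundary; fun_prop)
    ((ae_restrict_mem measurableSet_Ioi).mono fun _ ht => norm_rpow_mul_laplaceSinBoundary_le ht)

lemma norm_integral_rpow_mul_laplaceSinBoundary_le (hα : 0 < α) (hT : 0 < T) :
    ‖∫ t in Ioi 0, t ^ (α - 1) * laplaceSinBoundary T t‖ ≤ Gamma α * T ^ (-α) := by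
  rw [← integral_rpow_mul_exp_neg_mul_Ioi_eq_Gamma_mul hα hT]
  exact (norm_integral_le_integral_norm _).trans (setIntegral_mono_on
    (integrableOn_rpow_mul_laplaceSinBoundary hα hT).norm
    (integrableOn_rpow_mul_exp_neg_mul_Ioi hα hT) measurableSet_Ioi
    fun _ ht => norm_rpow_mul_laplaceSinBoundary_le ht)

lemma tendsto_integral_rpow_mul_laplaceSinBoundary (hα : 0 < α) :
    Tendsto (fun T => ∫ t in Ioi 0, t ^ (α - 1) * laplaceSinBoundary T t) atTop (𝓝 0) := by
  have hbound := (tendsto_rpow_neg_atTop hα).const_mul (Gamma α)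
  rw [mul_zero] at hbound
  exact squeeze_zero_norm' ((eventually_gt_atTop 0).mono fun T hT =>
    norm_integral_rpow_mul_laplaceSinBoundary_le hα hT) hbound

end Boundary

section SinIntegral

variable {α : ℝ}

lemma integrableOn_rpow_neg_mul_sin_Ioc (hα : α < 2) (T : ℝ) :
    IntegrableOn (fun y => y ^ (-α) * sin y) (Ioc 0 T) := by
  refine (intervalIntegral.intervalIntegrable_rpow' (r := -α + 1) (by linarith)
    (a := 0) (b := T)).1.mono' (by fun_prop)
    ((ae_restrict_mem measurableSet_Ioc).mono fun y hy => ?_)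
  rw [norm_mul, norm_of_nonneg (rpow_pos_of_pos hy.1 _).le, rpow_add_one hy.1.ne']
  exact mul_le_mul_of_nonneg_left ((norm_eq_abs _ ▸ abs_sin_le_abs).trans_eq (abs_of_pos hy.1))
    (rpow_pos_of_pos hy.1 _).le

theorem Gamma_mul_integral_rpow_neg_mul_sin (h0 : 0 < α) (h2 : α < 2) {T : ℝ} (hT : 0 < T) :
    Gamma α * ∫ y in (0 : ℝ)..T, y ^ (-α) * sin y
      = π / 2 / sin (π * α / 2) - ∫ t in Ioi 0, t ^ (α - 1) * laplaceSinBoundary T t := by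
  have laplace : ∀ t ∈ Ioi (0 : ℝ), t ^ (α - 1) * ∫ y in Ioc 0 T, exp (-(t * y)) * sin y
      = t ^ (α - 1) / (1 + t ^ 2) - t ^ (α - 1) * laplaceSinBoundary T t := fun t _ => by
    rw [← intervalIntegral.integral_of_le hT.le, integral_exp_neg_mul_mul_sin, mul_sub,
      div_eq_mul_inv]
  rw [intervalIntegral.integral_of_le hT.le,
    Gamma_mul_integral_rpow_neg_mul (μ := volume.restrict (Ioc 0 T)) h0
      ((ae_restrict_mem measurableSet_Ioc).mono fun _ hy => hy.1)
      continuous_sin.aestronglyMeasurable (integrableOn_rpow_neg_mul_sin_Ioc h2 T),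
    setIntegral_congr_fun measurableSet_Ioi laplace,
    integral_sub (integrableOn_rpow_div_one_add_sq_Ioi h0 h2)
      (integrableOn_rpow_mul_laplaceSinBoundary h0 hT),
    integral_rpow_div_one_add_sq_Ioi h0 h2]

end SinIntegral

theorem improper_integral_sin_rpow (α : ℝ) (h1 : 0 < α) (h2 : α < 2) :
    Tendsto (fun T : ℝ => ∫ y in (0:ℝ)..T, y ^ (-α) * Real.sin y) atTop
      (nhds ((π / 2) / (Real.Gamma α * Real.sin (π * α / 2)))) := by
  have hΓ : Gamma α ≠ 0 := (Gamma_pos_of_pos h1).ne'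
  have hlim : Tendsto (fun T => (π / 2 / sin (π * α / 2)
      - ∫ t in Ioi 0, t ^ (α - 1) * laplaceSinBoundary T t) / Gamma α) atTop
      (𝓝 (π / 2 / (Gamma α * sin (π * α / 2)))) := by
    convert ((tendsto_integral_rpow_mul_laplaceSinBoundary h1).const_sub _).div_const _ using 2
    ring
  refine hlim.congr' ((eventually_gt_atTop 0).mono fun T hT => ?_)
  rw [← Gamma_mul_integral_rpow_neg_mul_sin h1 h2 hT, mul_div_cancel_left₀ _ hΓ]
end

section
/- The function Λ₀(d) = Λ(ρ(d)) is an infinitely differentiable strictly increasing function of d on (-0.5, 1.5), where Λ(r) = (2/π) arctan(√((1+r)/(1-r))) + (1/π) √((1+r)/(1-r)) log(2/(1+r)) for r ∈ (-1,1), and ρ(d) = (4^{d+1.5} - 9^{d+0.5} - 7) / (2(4 - 4^{d+0.5})). -/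
open Real Set

noncomputable def Lam (r : ℝ) : ℝ :=
  (2 / π) * Real.arctan (Real.sqrt ((1 + r) / (1 - r)))
    + (1 / π) * Real.sqrt ((1 + r) / (1 - r)) * Real.log (2 / (1 + r))

open FormalMultilinearSeries

noncomputable def phiSeries : FormalMultilinearSeries ℝ ℝ ℝ :=
  ofScalars ℝ (fun n => ((Nat.factorial (n+1) : ℝ))⁻¹)

noncomputable def phi (y : ℝ) : ℝ := phiSeries.sum y

lemma phiSeries_radius : phiSeries.radius = ⊤ := by
  apply radius_eq_top_of_summable_norm
  intro r
  apply Summable.of_nonneg_of_le (fun n => by positivity) (fun n => ?_)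
    (Real.summable_pow_div_factorial r)
  rw [phiSeries, ofScalars_norm, norm_inv, Real.norm_natCast, div_eq_inv_mul]
  have h1 : ((Nat.factorial n : ℝ))⁻¹ ≥ ((Nat.factorial (n+1) : ℝ))⁻¹ := by
    apply inv_anti₀
    · positivity
    · exact_mod_cast Nat.factorial_le (Nat.le_succ n)
  have h2 : (0:ℝ) ≤ (r:ℝ) ^ n := pow_nonneg r.coe_nonneg n
  exact mul_le_mul_of_nonneg_right h1 h2

lemma phi_contDiff : ContDiff ℝ (⊤ : ℕ∞) phi := by
  rw [contDiff_iff_contDiffAt]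
  intro y
  have h := phiSeries.hasFPowerSeriesOnBall (phiSeries_radius ▸ ENNReal.zero_lt_top)
  have : AnalyticAt ℝ phi y := by
    apply h.analyticAt_of_mem
    simp [phiSeries_radius]
  exact this.contDiffAt

lemma phi_tsum (y : ℝ) : phi y = ∑' n : ℕ, y ^ n / (Nat.factorial (n+1)) := by
  rw [phi, phiSeries]
  show ofScalarsSum _ y = _
  rw [ofScalars_sum_eq]
  refine tsum_congr fun n => ?_
  rw [smul_eq_mul, inv_mul_eq_div]

lemma phi_mul (y : ℝ) : y * phi y = Real.exp y - 1 := by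
  rw [phi_tsum, ← tsum_mul_left]
  have h1 : Real.exp y = ∑' n : ℕ, y ^ n / (Nat.factorial n) := by
    rw [Real.exp_eq_exp_ℝ, NormedSpace.exp_eq_tsum_div]
  have hs : Summable (fun n : ℕ => y ^ n / (Nat.factorial n)) :=
    Real.summable_pow_div_factorial y
  have h2 := Summable.tsum_eq_zero_add hs
  simp only [pow_zero, Nat.factorial_zero, Nat.cast_one, div_one] at h2
  rw [h1, h2]
  have : ∀ n : ℕ, y * (y ^ n / (Nat.factorial (n+1))) = y ^ (n+1) / (Nat.factorial (n+1)) := by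
    intro n; rw [pow_succ]; ring
  rw [tsum_congr this]
  ring

lemma phi_zero : phi 0 = 1 := by
  rw [phi_tsum]
  rw [tsum_eq_single 0 (fun n hn => by
    rw [zero_pow hn, zero_div])]
  norm_num

lemma phi_pos (y : ℝ) : 0 < phi y := by
  rcases lt_trichotomy y 0 with h | h | h
  · have h1 : Real.exp y - 1 < 0 := by
      have := Real.exp_lt_one_iff.mpr h; linarith
    have h2 := phi_mul y
    nlinarith
  · rw [h, phi_zero]; norm_num
  · have h1 : 0 < Real.exp y - 1 := by
      have := Real.one_lt_exp_iff.mpr h; linarith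
    have h2 := phi_mul y
    nlinarith

noncomputable def cc : ℝ := Real.log 9 / Real.log 4

lemma la_pos : (0:ℝ) < Real.log 4 := Real.log_pos (by norm_num)
lemma lb_pos : (0:ℝ) < Real.log 9 := Real.log_pos (by norm_num)
lemma la_lt_lb : Real.log 4 < Real.log 9 := Real.log_lt_log (by norm_num) (by norm_num)
lemma lb_lt_2la : Real.log 9 < 2 * Real.log 4 := by
  have h : (2:ℝ) * Real.log 4 = Real.log 16 := by
    rw [show (16:ℝ) = 4^(2:ℕ) by norm_num, Real.log_pow]; push_cast; ring
  rw [h]; exact Real.log_lt_log (by norm_num) (by norm_num)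

lemma cc_gt_one : 1 < cc := by
  rw [cc]; rw [lt_div_iff₀ la_pos]; linarith [la_lt_lb]
lemma cc_lt_two : cc < 2 := by
  rw [cc]; rw [div_lt_iff₀ la_pos]; linarith [lb_lt_2la]

noncomputable def Psi (w : ℝ) : ℝ := if w = 1 then cc else (w ^ cc - 1) / (w - 1)

noncomputable def gfun (x : ℝ) : ℝ :=
  (9 * Real.log 9 * phi (Real.log 9 * (x - 1)) - 8 * Real.log 4 * phi (Real.log 4 * (x - 1)))
    / (4 * Real.log 4 * phi (Real.log 4 * (x - 1)))

lemma gfun_contDiff : ContDiff ℝ (⊤ : ℕ∞) gfun := by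
  have hb : ContDiff ℝ (⊤ : ℕ∞) (fun x : ℝ => phi (Real.log 9 * (x - 1))) :=
    phi_contDiff.comp (by fun_prop)
  have ha : ContDiff ℝ (⊤ : ℕ∞) (fun x : ℝ => phi (Real.log 4 * (x - 1))) :=
    phi_contDiff.comp (by fun_prop)
  apply ContDiff.div
  · exact (contDiff_const.mul hb).sub (contDiff_const.mul ha)
  · exact contDiff_const.mul ha
  · intro x
    have := phi_pos (Real.log 4 * (x - 1))
    positivity

lemma gfun_eq {x : ℝ} (hx : x ≠ 1) :
    gfun x = ((9:ℝ) ^ x - 2 * (4:ℝ) ^ x - 1) / ((4:ℝ) ^ x - 4) := by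
  set s := x - 1 with hs_def
  have hs : s ≠ 0 := sub_ne_zero.mpr hx
  have e1 : Real.log 4 * s * phi (Real.log 4 * s) = Real.exp (Real.log 4 * s) - 1 :=
    phi_mul _
  have e2 : Real.log 9 * s * phi (Real.log 9 * s) = Real.exp (Real.log 9 * s) - 1 :=
    phi_mul _
  have hE1 : Real.exp (Real.log 4 * s) = (4:ℝ) ^ s := (Real.rpow_def_of_pos (by norm_num) s).symm
  have hE2 : Real.exp (Real.log 9 * s) = (9:ℝ) ^ s := (Real.rpow_def_of_pos (by norm_num) s).symm
  have hnum : (9 * Real.log 9 * phi (Real.log 9 * s) - 8 * Real.log 4 * phi (Real.log 4 * s)) * s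
      = 9 * (9:ℝ) ^ s - 8 * (4:ℝ) ^ s - 1 := by
    rw [← hE1, ← hE2]
    linear_combination 9 * e2 - 8 * e1
  have hden : (4 * Real.log 4 * phi (Real.log 4 * s)) * s = 4 * (4:ℝ) ^ s - 4 := by
    rw [← hE1]; linear_combination 4 * e1
  have h4 : (4:ℝ) ^ x = 4 * (4:ℝ) ^ s := by
    rw [hs_def, show x = 1 + (x - 1) by ring]
    rw [Real.rpow_add (by norm_num), Real.rpow_one]; ring_nf
  have h9 : (9:ℝ) ^ x = 9 * (9:ℝ) ^ s := by
    rw [hs_def, show x = 1 + (x - 1) by ring]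
    rw [Real.rpow_add (by norm_num), Real.rpow_one]; ring_nf
  rw [gfun]
  rw [← mul_div_mul_right _ _ hs]
  rw [hnum, hden, h4, h9]
  congr 1
  ring

lemma four_rpow_ne_one {s : ℝ} (hs : s ≠ 0) : (4:ℝ) ^ s ≠ 1 := by
  rw [Real.rpow_def_of_pos (by norm_num)]
  rw [Ne, Real.exp_eq_one_iff]
  exact fun h => hs (by
    rcases mul_eq_zero.mp h with h' | h'
    · exact absurd h' (ne_of_gt la_pos)
    · exact h')

lemma gfun_eq_Psi (x : ℝ) : gfun x = (9 * Psi ((4:ℝ) ^ (x - 1)) - 8) / 4 := by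
  by_cases hx : x = 1
  · subst hx
    simp only [sub_self, Real.rpow_zero, Psi, ↓reduceIte, gfun, mul_zero, phi_zero, mul_one]
    rw [cc]
    have := la_pos
    field_simp
  · have hs : x - 1 ≠ 0 := sub_ne_zero.mpr hx
    have hw_pos : (0:ℝ) < (4:ℝ) ^ (x - 1) := Real.rpow_pos_of_pos (by norm_num) _
    have hw_ne : (4:ℝ) ^ (x - 1) ≠ 1 := four_rpow_ne_one hs
    have hwc : ((4:ℝ) ^ (x - 1)) ^ cc = (9:ℝ) ^ (x - 1) := by
      rw [← Real.rpow_mul (by norm_num : (0:ℝ) ≤ 4)]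
      rw [Real.rpow_def_of_pos (by norm_num : (0:ℝ) < 4), Real.rpow_def_of_pos (by norm_num : (0:ℝ) < 9)]
      congr 1
      rw [cc]
      have := la_pos.ne'
      field_simp
    have h4 : (4:ℝ) ^ x = 4 * (4:ℝ) ^ (x - 1) := by
      rw [show x = 1 + (x - 1) by ring]
      rw [Real.rpow_add (by norm_num), Real.rpow_one]; ring_nf
    have h9 : (9:ℝ) ^ x = 9 * (9:ℝ) ^ (x - 1) := by
      rw [show x = 1 + (x - 1) by ring]
      rw [Real.rpow_add (by norm_num), Real.rpow_one]; ring_nf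
    rw [gfun_eq hx, Psi, if_neg hw_ne, hwc, h4, h9]
    have hA : (4:ℝ) ^ (x - 1) - 1 ≠ 0 := sub_ne_zero.mpr hw_ne
    have hA4 : 4 * (4:ℝ) ^ (x - 1) - 4 ≠ 0 := by
      intro h; apply hA; linarith [h]
    field_simp
    ring

lemma Psi_strictMonoOn : StrictMonoOn Psi (Ioi (0:ℝ)) := by
  have hkey : ∀ w : ℝ, 0 < w → w ≠ 1 → Psi w = ((w:ℝ) ^ cc - 1) / (w - 1) := fun w _ hw =>
    if_neg hw
  have hBern : ∀ w : ℝ, 0 < w → w ≠ 1 → 1 + cc * (w - 1) < w ^ cc := by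
    intro w hw hw1
    have := one_add_mul_self_lt_rpow_one_add (s := w - 1) (by linarith) (sub_ne_zero.mpr hw1)
      cc_gt_one
    simpa using this
  have hlt : ∀ w : ℝ, 0 < w → 1 < w → cc < Psi w := by
    intro w hw hw1
    rw [hkey w hw (by linarith)]
    rw [lt_div_iff₀ (by linarith : (0:ℝ) < w - 1)]
    have := hBern w hw (by linarith)
    linarith
  have hgt : ∀ w : ℝ, 0 < w → w < 1 → Psi w < cc := by
    intro w hw hw1
    rw [hkey w hw (by linarith)]
    rw [div_lt_iff_of_neg (by linarith : w - 1 < 0)]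
    have := hBern w hw (by linarith)
    linarith
  intro w1 h1 w2 h2 hlt12
  simp only [mem_Ioi] at h1 h2
  rcases eq_or_ne w1 1 with rfl | hw1
  · rw [Psi, if_pos rfl]
    exact hlt w2 h2 hlt12
  rcases eq_or_ne w2 1 with rfl | hw2
  · have hP1 : Psi 1 = cc := if_pos rfl
    rw [hP1]
    exact hgt w1 h1 hlt12
  · rw [hkey w1 h1 hw1, hkey w2 h2 hw2]
    have := (strictConvexOn_rpow cc_gt_one).secant_strict_mono
      (a := 1) (x := w1) (y := w2) (by norm_num) (le_of_lt h1) (le_of_lt h2) hw1 hw2 hlt12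
    simpa [Real.one_rpow] using this

lemma gfun_strictMono : StrictMono gfun := by
  intro x y hxy
  rw [gfun_eq_Psi, gfun_eq_Psi]
  have h1 : (4:ℝ) ^ (x - 1) < (4:ℝ) ^ (y - 1) := by
    apply Real.rpow_lt_rpow_left_iff (by norm_num : (1:ℝ) < 4) |>.mpr
    linarith
  have := Psi_strictMonoOn (Real.rpow_pos_of_pos (by norm_num) _ : (0:ℝ) < (4:ℝ)^(x-1))
    (Real.rpow_pos_of_pos (by norm_num) _ : (0:ℝ) < (4:ℝ)^(y-1)) h1
  linarith

lemma gfun_zero : gfun 0 = 2/3 := by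
  rw [gfun_eq (by norm_num)]
  rw [Real.rpow_zero, Real.rpow_zero]
  norm_num

lemma gfun_two : gfun 2 = 4 := by
  rw [gfun_eq (by norm_num)]
  rw [show (2:ℝ) = ((2:ℕ):ℝ) by norm_num, Real.rpow_natCast, Real.rpow_natCast]
  norm_num

noncomputable def rho (d : ℝ) : ℝ := gfun (d + 0.5) / 2 - 1

lemma rho_contDiff : ContDiff ℝ (⊤ : ℕ∞) rho := by
  apply ContDiff.sub _ contDiff_const
  apply ContDiff.div_const
  exact gfun_contDiff.comp (by fun_prop)

lemma rho_strictMono : StrictMono rho := by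
  intro x y hxy
  have := gfun_strictMono (show x + 0.5 < y + 0.5 by linarith)
  simp only [rho]
  linarith

lemma rho_mem {d : ℝ} (hd : d ∈ Ioo (-0.5 : ℝ) 1.5) : rho d ∈ Ioo (-1 : ℝ) 1 := by
  obtain ⟨h1, h2⟩ := hd
  have hg1 : gfun 0 < gfun (d + 0.5) := gfun_strictMono (by linarith)
  have hg2 : gfun (d + 0.5) < gfun 2 := gfun_strictMono (by linarith)
  rw [gfun_zero] at hg1
  rw [gfun_two] at hg2
  constructor <;> simp only [rho] <;> linarith

lemma rho_eq {d : ℝ} (hd : d ≠ 0.5) :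
    rho d = ((4:ℝ) ^ (d + 1.5) - 9 ^ (d + 0.5) - 7) / (2 * (4 - 4 ^ (d + 0.5))) := by
  have hx : d + 0.5 ≠ 1 := by intro h; apply hd; linarith
  have h415 : (4:ℝ) ^ (d + 1.5) = 4 * (4:ℝ) ^ (d + 0.5) := by
    rw [show d + 1.5 = (d + 0.5) + 1 by ring, Real.rpow_add (by norm_num), Real.rpow_one]
    ring
  have hne : (4:ℝ) ^ (d + 0.5) - 4 ≠ 0 := by
    intro h
    have : (4:ℝ) ^ (d + 0.5) = 4 * (4:ℝ) ^ ((d + 0.5) - 1 : ℝ) := by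
      rw [show d + 0.5 = 1 + ((d + 0.5) - 1) by ring, Real.rpow_add (by norm_num), Real.rpow_one]
      ring_nf
    have h4 : (4:ℝ) ^ ((d + 0.5) - 1 : ℝ) ≠ 1 := four_rpow_ne_one (sub_ne_zero.mpr hx)
    apply h4
    nlinarith [this, h]
  have hne2 : 2 * (4 - (4:ℝ) ^ (d + 0.5)) ≠ 0 := by
    intro h; apply hne; linarith [mul_eq_zero.mp h]
  have hne3 : (4:ℝ) - 4 ^ (d + 0.5) ≠ 0 := fun h => hne (by linarith)
  rw [rho, gfun_eq hx, h415]
  field_simp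
  ring

lemma Lam_contDiffOn : ContDiffOn ℝ (⊤ : ℕ∞) Lam (Ioo (-1 : ℝ) 1) := by
  intro r hr
  obtain ⟨h1, h2⟩ := hr
  have h1r : (0:ℝ) < 1 + r := by linarith
  have h2r : (0:ℝ) < 1 - r := by linarith
  have hT : (0:ℝ) < (1 + r) / (1 - r) := by positivity
  have hTfun : ContDiffAt ℝ (⊤ : ℕ∞) (fun r : ℝ => (1 + r) / (1 - r)) r := by
    apply ContDiffAt.div
    · fun_prop
    · fun_prop
    · exact h2r.ne'
  have hsqrt : ContDiffAt ℝ (⊤ : ℕ∞) (fun r : ℝ => Real.sqrt ((1 + r) / (1 - r))) r :=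
    (Real.contDiffAt_sqrt hT.ne').comp r hTfun
  have harctan : ContDiffAt ℝ (⊤ : ℕ∞) (fun r : ℝ => Real.arctan (Real.sqrt ((1 + r) / (1 - r)))) r :=
    Real.contDiff_arctan.contDiffAt.comp r hsqrt
  have hlogarg : ContDiffAt ℝ (⊤ : ℕ∞) (fun r : ℝ => (2:ℝ) / (1 + r)) r := by
    apply ContDiffAt.div
    · fun_prop
    · fun_prop
    · exact h1r.ne'
  have hlog : ContDiffAt ℝ (⊤ : ℕ∞) (fun r : ℝ => Real.log (2 / (1 + r))) r :=
    (Real.contDiffAt_log.mpr (by positivity)).comp r hlogarg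
  exact (((contDiffAt_const.mul harctan).add
    ((contDiffAt_const.mul hsqrt).mul hlog))).contDiffWithinAt

noncomputable def Ltil (q : ℝ) : ℝ :=
  (2 / π) * Real.arctan q + (1 / π) * (q * (Real.log (1 + q^2) - 2 * Real.log q))

lemma Lam_eq_Ltil {r : ℝ} (hr : r ∈ Ioo (-1 : ℝ) 1) :
    Lam r = Ltil (Real.sqrt ((1 + r) / (1 - r))) := by
  obtain ⟨h1, h2⟩ := hr
  have h1r : (0:ℝ) < 1 + r := by linarith
  have h2r : (0:ℝ) < 1 - r := by linarith
  have hT : (0:ℝ) < (1 + r) / (1 - r) := by positivity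
  set q := Real.sqrt ((1 + r) / (1 - r)) with hq
  have hq_pos : 0 < q := Real.sqrt_pos.mpr hT
  have hq_sq : q ^ 2 = (1 + r) / (1 - r) := Real.sq_sqrt hT.le
  have hkey : Real.log (2 / (1 + r)) = Real.log (1 + q ^ 2) - 2 * Real.log q := by
    have h2q : 2 * Real.log q = Real.log (q ^ 2) := by
      rw [Real.log_pow]; push_cast; ring
    rw [h2q, hq_sq, ← Real.log_div (by positivity) (by positivity)]
    congr 1
    have : 1 + (1 + r) / (1 - r) = 2 / (1 - r) := by field_simp; ring
    rw [this]
    field_simp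
  rw [Lam, Ltil, hkey]
  ring

lemma Ltil_hasDerivAt {q : ℝ} (hq : 0 < q) :
    HasDerivAt Ltil ((1 / π) * (Real.log (1 + q^2) - 2 * Real.log q)) q := by
  have hq2 : (0:ℝ) < 1 + q ^ 2 := by positivity
  have h_arctan : HasDerivAt Real.arctan (1 / (1 + q ^ 2)) q := Real.hasDerivAt_arctan q
  have h_inner : HasDerivAt (fun q : ℝ => 1 + q ^ 2) (2 * q) q := by
    simpa using ((hasDerivAt_pow 2 q).const_add 1)
  have h_log1 : HasDerivAt (fun q : ℝ => Real.log (1 + q ^ 2)) ((2 * q) / (1 + q ^ 2)) q := by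
    have := (Real.hasDerivAt_log hq2.ne').comp q h_inner
    simpa [div_eq_inv_mul, mul_comm, Function.comp_def] using this
  have h_log2 : HasDerivAt (fun q : ℝ => 2 * Real.log q) (2 / q) q := by
    have := (Real.hasDerivAt_log hq.ne').const_mul (2:ℝ)
    simpa [div_eq_inv_mul, mul_comm] using this
  have h_diff : HasDerivAt (fun q : ℝ => Real.log (1 + q ^ 2) - 2 * Real.log q)
      ((2 * q) / (1 + q ^ 2) - 2 / q) q := h_log1.sub h_log2
  have h_prod : HasDerivAt (fun q : ℝ => q * (Real.log (1 + q ^ 2) - 2 * Real.log q))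
      (1 * (Real.log (1 + q ^ 2) - 2 * Real.log q)
        + q * ((2 * q) / (1 + q ^ 2) - 2 / q)) q :=
    (hasDerivAt_id q).mul h_diff
  have h_total := ((h_arctan.const_mul (2 / π)).add (h_prod.const_mul (1 / π)))
  convert h_total using 1
  · rfl
  · rfl
  · rfl
  have hπ : π ≠ 0 := Real.pi_ne_zero
  field_simp
  ring

lemma Ltil_strictMonoOn : StrictMonoOn Ltil (Ioi (0:ℝ)) := by
  apply strictMonoOn_of_deriv_pos (convex_Ioi 0)
  · intro q hq
    exact (Ltil_hasDerivAt hq).differentiableAt.continuousAt.continuousWithinAt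
  · intro q hq
    rw [interior_Ioi] at hq
    rw [(Ltil_hasDerivAt hq).deriv]
    have hlog : 2 * Real.log q < Real.log (1 + q ^ 2) := by
      have h2q : 2 * Real.log q = Real.log (q ^ 2) := by
        rw [Real.log_pow]; push_cast; ring
      rw [h2q]
      apply Real.log_lt_log (pow_pos hq 2)
      linarith
    have hπ : 0 < π := Real.pi_pos
    have : 0 < Real.log (1 + q ^ 2) - 2 * Real.log q := by linarith
    exact mul_pos (by positivity) this

lemma sqrtT_lt {r1 r2 : ℝ} (h1 : r1 ∈ Ioo (-1:ℝ) 1) (h2 : r2 ∈ Ioo (-1:ℝ) 1) (h12 : r1 < r2) :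
    Real.sqrt ((1 + r1) / (1 - r1)) < Real.sqrt ((1 + r2) / (1 - r2)) := by
  obtain ⟨a1, b1⟩ := h1
  obtain ⟨a2, b2⟩ := h2
  apply Real.sqrt_lt_sqrt (div_nonneg (by linarith) (by linarith))
  rw [div_lt_div_iff₀ (by linarith) (by linarith)]
  nlinarith

lemma Lam_strictMonoOn : StrictMonoOn Lam (Ioo (-1:ℝ) 1) := by
  intro r1 h1 r2 h2 h12
  rw [Lam_eq_Ltil h1, Lam_eq_Ltil h2]
  apply Ltil_strictMonoOn
  · exact Real.sqrt_pos.mpr (div_pos (by linarith [h1.1]) (by linarith [h1.2]))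
  · exact Real.sqrt_pos.mpr (div_pos (by linarith [h2.1]) (by linarith [h2.2]))
  · exact sqrtT_lt h1 h2 h12

theorem Lambda0_smooth_strict_mono :
    ∃ ρ : ℝ → ℝ,
      ContinuousOn ρ (Ioo (-0.5 : ℝ) 1.5) ∧
      (∀ d ∈ Ioo (-0.5 : ℝ) 1.5, d ≠ 0.5 →
        ρ d = ((4:ℝ) ^ (d + 1.5) - 9 ^ (d + 0.5) - 7) / (2 * (4 - 4 ^ (d + 0.5)))) ∧
      (∀ d ∈ Ioo (-0.5 : ℝ) 1.5, ρ d ∈ Ioo (-1 : ℝ) 1) ∧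
      ContDiffOn ℝ (⊤ : ℕ∞) (fun d => Lam (ρ d)) (Ioo (-0.5 : ℝ) 1.5) ∧
      StrictMonoOn (fun d => Lam (ρ d)) (Ioo (-0.5 : ℝ) 1.5) := by
  refine ⟨rho, rho_contDiff.continuous.continuousOn, fun d _ hd => rho_eq hd,
    fun d hd => rho_mem hd, ?_, ?_⟩
  · exact Lam_contDiffOn.comp rho_contDiff.contDiffOn (fun d hd => rho_mem hd)
  · intro d1 h1 d2 h2 h12
    exact Lam_strictMonoOn (rho_mem h1) (rho_mem h2) (rho_strictMono h12)
end

section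
/- For all d ∈ (-0.5, 1.5), ρ(d) = (4^{d+1.5} - 9^{d+0.5} - 7) / (2(4 - 4^{d+0.5})) lies in the open interval (-1, 1), where at d = 0.5 the value is defined by continuous extension. -/
/-!
Put `t = 4 ^ (d + 1/2)` and `α = log₄ 9 > 1`. Then `4 ^ (d + 3/2) = 4 t` and `9 ^ (d + 1/2) = t ^ α`,
so `ρ(d) = -2 + (t ^ α - 4 ^ α) / (2 (t - 4))`: up to an affine change, `ρ` is the slope of the secant
of the strictly convex function `t ↦ t ^ α` through `4` and `t`, and its continuous extension at
`t = 4` is the derivative there (`dslope`). For `d ∈ (-1/2, 3/2)` we have `t ∈ (1, 16)`, and slopes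
of a strictly convex function through a fixed point increase, so this slope lies between the secant
slopes to `1` and to `16`, which are `8/3` and `6`. Hence `ρ(d) ∈ (-2/3, 1)`.
-/

open Set

theorem StrictConvexOn.dslope_mem_Ioo {s : Set ℝ} {f : ℝ → ℝ} (hf : StrictConvexOn ℝ s f)
    {a p q x : ℝ} (ha : a ∈ s) (hp : p ∈ s) (hq : q ∈ s) (hpa : p ≠ a) (hqa : q ≠ a)
    (hfa : DifferentiableAt ℝ f a) (hx : x ∈ Ioo p q) :
    dslope f a x ∈ Ioo (slope f a p) (slope f a q) := by
  have hxs : x ∈ s := hf.1.ordConnected.out hp hq (Ioo_subset_Icc_self hx)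
  rcases eq_or_ne x a with rfl | hxa
  · rw [dslope_same, slope_comm]
    exact ⟨hf.slope_lt_deriv hp ha hx.1 hfa, hf.deriv_lt_slope ha hq hx.2 hfa⟩
  · simp only [dslope_of_ne f hxa, slope_def_field]
    exact ⟨hf.secant_strict_mono ha hp hxs hpa hxa hx.1,
      hf.secant_strict_mono ha hxs hq hxa hqa hx.2⟩

noncomputable def irCorrelation (d : ℝ) : ℝ :=
  -2 + dslope (fun t : ℝ => t ^ Real.logb 4 9) 4 (4 ^ (d + 0.5)) / 2

lemma continuous_irCorrelation : Continuous irCorrelation := by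
  have hslope : ContinuousOn (dslope (fun t : ℝ => t ^ Real.logb 4 9) 4) (Ioi 0) :=
    (continuousOn_dslope (Ioi_mem_nhds (by norm_num))).2
      ⟨fun t ht => (Real.continuousAt_rpow_const _ _ (Or.inl ht.ne')).continuousWithinAt,
        Real.differentiableAt_rpow_const_of_ne _ (by norm_num)⟩
  refine continuous_const.add (Continuous.div_const ?_ _)
  exact hslope.comp_continuous (by fun_prop (disch := norm_num))
    fun d => Real.rpow_pos_of_pos (by norm_num) _

lemma irCorrelation_eq {d : ℝ} (hd : d ≠ 0.5) :
    irCorrelation d = ((4:ℝ) ^ (d + 1.5) - 9 ^ (d + 0.5) - 7) / (2 * (4 - 4 ^ (d + 0.5))) := by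
  set t : ℝ := 4 ^ (d + 0.5) with ht
  have ht4 : t ≠ 4 := by
    intro h
    have h1 : (4:ℝ) ^ (d + 0.5) = 4 ^ (1:ℝ) := by rw [Real.rpow_one]; exact h
    rw [Real.rpow_right_inj (by norm_num) (by norm_num)] at h1
    exact hd (by linarith)
  have h4t : (4:ℝ) ^ (d + 1.5) = 4 * t := by
    rw [show d + 1.5 = (d + 0.5) + 1 by ring, Real.rpow_add_one (by norm_num), mul_comm]
  have h9t : (9:ℝ) ^ (d + 0.5) = t ^ Real.logb 4 9 := by
    rw [ht, ← Real.rpow_mul (by norm_num), mul_comm, Real.rpow_mul (by norm_num),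
      Real.rpow_logb (by norm_num) (by norm_num) (by norm_num)]
  have h49 : (4:ℝ) ^ Real.logb 4 9 = 9 := Real.rpow_logb (by norm_num) (by norm_num) (by norm_num)
  rw [irCorrelation, ← ht, dslope_of_ne _ ht4, slope_def_field, h4t, h9t, h49]
  have : t - 4 ≠ 0 := sub_ne_zero.2 ht4
  have : 4 - t ≠ 0 := sub_ne_zero.2 ht4.symm
  field_simp
  ring

lemma irCorrelation_mem_Ioo {d : ℝ} (hd : d ∈ Ioo (-0.5 : ℝ) 1.5) :
    irCorrelation d ∈ Ioo (-1 : ℝ) 1 := by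
  set α := Real.logb 4 9
  have hα : 1 < α := by
    rw [Real.lt_logb_iff_rpow_lt (by norm_num) (by norm_num)]; norm_num
  have h4 : (4:ℝ) ^ α = 9 := Real.rpow_logb (by norm_num) (by norm_num) (by norm_num)
  have h16 : (16:ℝ) ^ α = 81 := by
    rw [show (16:ℝ) = 4 ^ (2:ℝ) by norm_num, ← Real.rpow_mul (by norm_num), mul_comm,
      Real.rpow_mul (by norm_num), h4]
    norm_num
  have ht : (4:ℝ) ^ (d + 0.5) ∈ Ioo 1 16 := by
    constructor
    · exact Real.one_lt_rpow (by norm_num) (by linarith [hd.1])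
    · calc (4:ℝ) ^ (d + 0.5) < 4 ^ (2:ℝ) :=
            Real.rpow_lt_rpow_of_exponent_lt (by norm_num) (by linarith [hd.2])
        _ = 16 := by norm_num
  obtain ⟨hlo, hhi⟩ := (strictConvexOn_rpow hα).dslope_mem_Ioo (a := 4) (by norm_num)
    (by norm_num) (by norm_num) (by norm_num) (by norm_num)
    (Real.differentiableAt_rpow_const_of_ne _ (by norm_num)) ht
  simp only [slope_def_field, Real.one_rpow, h4, h16] at hlo hhi
  norm_num at hlo hhi
  rw [irCorrelation]
  constructor <;> linarith

theorem rho_mem_Ioo :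
    ∃ ρ : ℝ → ℝ,
      ContinuousOn ρ (Ioo (-0.5 : ℝ) 1.5) ∧
      (∀ d ∈ Ioo (-0.5 : ℝ) 1.5, d ≠ 0.5 →
        ρ d = ((4:ℝ) ^ (d + 1.5) - 9 ^ (d + 0.5) - 7) / (2 * (4 - 4 ^ (d + 0.5)))) ∧
      (∀ d ∈ Ioo (-0.5 : ℝ) 1.5, ρ d ∈ Ioo (-1 : ℝ) 1) :=
  ⟨irCorrelation, continuous_irCorrelation.continuousOn, fun _ _ hd => irCorrelation_eq hd,
    fun _ hd => irCorrelation_mem_Ioo hd⟩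
end
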